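/- Let Z be a real M×K matrix and let α > 0. Set R = Z Zᵀ and C = R (R + α⁻² I)⁻¹. Then C minimizes the Conceptor loss L(B) = ‖Z − B Z‖²_fro + α⁻² ‖B‖²_fro over all real M×M matrices B, i.e., L(C) ≤ L(B) for every M×M matrix B. -/

import Mathlib

open Matrix BigOperators

noncomputable def frobSq {m n : ℕ} (A : Matrix (Fin m) (Fin n) ℝ) : ℝ :=
  ∑ i, ∑ j, (A i j) ^ 2

/-!
Writing `B = C + D`, the loss expands as
`L(C + D) = L(C) + ‖D Z‖² + α⁻² ‖D‖² + 2 tr((C (R + α⁻² I) - R) Dᵀ)`,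
and `C = R (R + α⁻² I)⁻¹` is exactly the solution of the normal equation `C (R + α⁻² I) = R`
that kills the cross term. What remains beyond `L(C)` is a sum of squares.
-/

section Frobenius

variable {m n : ℕ}

lemma frobSq_eq_trace (A : Matrix (Fin m) (Fin n) ℝ) : frobSq A = trace (A * Aᵀ) := by
  simp [frobSq, trace, mul_apply, sq]

lemma frobSq_nonneg (A : Matrix (Fin m) (Fin n) ℝ) : 0 ≤ frobSq A :=
  Finset.sum_nonneg fun _ _ => Finset.sum_nonneg fun _ _ => sq_nonneg _

lemma trace_mul_transpose_comm (X Y : Matrix (Fin m) (Fin n) ℝ) :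
    trace (Y * Xᵀ) = trace (X * Yᵀ) := by
  rw [← trace_transpose (Y * Xᵀ), transpose_mul, transpose_transpose]

lemma frobSq_add (X Y : Matrix (Fin m) (Fin n) ℝ) :
    frobSq (X + Y) = frobSq X + 2 * trace (X * Yᵀ) + frobSq Y := by
  simp only [frobSq_eq_trace, transpose_add, Matrix.add_mul, Matrix.mul_add, trace_add,
    trace_mul_transpose_comm Y X]
  ring

lemma frobSq_sub (X Y : Matrix (Fin m) (Fin n) ℝ) :
    frobSq (X - Y) = frobSq X - 2 * trace (X * Yᵀ) + frobSq Y := by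
  simp only [frobSq_eq_trace, transpose_sub, Matrix.sub_mul, Matrix.mul_sub, trace_sub,
    trace_mul_transpose_comm Y X]
  ring

end Frobenius

lemma mul_inv_add_smul_one_mul_cancel {n : Type*} [Fintype n] [DecidableEq n]
    {R : Matrix n n ℝ} (hR : R.PosSemidef) {ε : ℝ} (hε : 0 < ε) :
    R * (R + ε • 1)⁻¹ * (R + ε • 1) = R :=
  nonsing_inv_mul_cancel_right _ _ <|
    (isUnit_iff_isUnit_det _).mp (PosDef.posSemidef_add hR (PosDef.one.smul hε)).isUnit

noncomputable def conceptorLoss {M K : ℕ} (Z : Matrix (Fin M) (Fin K) ℝ) (ε : ℝ)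
    (B : Matrix (Fin M) (Fin M) ℝ) : ℝ :=
  frobSq (Z - B * Z) + ε * frobSq B

section NormalEquation

variable {M K : ℕ} {Z : Matrix (Fin M) (Fin K) ℝ} {ε : ℝ} {C : Matrix (Fin M) (Fin M) ℝ}

lemma conceptorLoss_eq_add_of_mul_eq (hC : C * (Z * Zᵀ + ε • 1) = Z * Zᵀ)
    (B : Matrix (Fin M) (Fin M) ℝ) :
    conceptorLoss Z ε B =
      conceptorLoss Z ε C + (frobSq ((B - C) * Z) + ε * frobSq (B - C)) := by
  have hresidual : (Z - C * Z) * Zᵀ = ε • C := by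
    rw [Matrix.mul_add, Matrix.mul_smul, Matrix.mul_one, ← Matrix.mul_assoc] at hC
    rw [Matrix.sub_mul, ← hC, add_sub_cancel_left]
  obtain ⟨D, rfl⟩ : ∃ D, B = C + D := ⟨B - C, by abel⟩
  have hcross : (Z - C * Z) * (D * Z)ᵀ = ε • (C * Dᵀ) := by
    rw [transpose_mul, ← Matrix.mul_assoc, hresidual, smul_mul]
  rw [conceptorLoss, conceptorLoss, add_sub_cancel_left, Matrix.add_mul, ← sub_sub, frobSq_sub,
    frobSq_add, hcross, trace_smul, smul_eq_mul]
  ring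

lemma conceptorLoss_le_of_mul_eq (hε : 0 ≤ ε) (hC : C * (Z * Zᵀ + ε • 1) = Z * Zᵀ)
    (B : Matrix (Fin M) (Fin M) ℝ) : conceptorLoss Z ε C ≤ conceptorLoss Z ε B := by
  rw [conceptorLoss_eq_add_of_mul_eq hC B, le_add_iff_nonneg_right]
  exact add_nonneg (frobSq_nonneg _) (mul_nonneg hε (frobSq_nonneg _))

end NormalEquation

/-- The Conceptor `C = R (R + α⁻² I)⁻¹` with `R = Z Zᵀ` minimizes the Conceptor loss
`L(B) = ‖Z − B Z‖²_fro + α⁻² ‖B‖²_fro` over all real M×M matrices `B` (Eq. (5)–(6)). -/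
theorem conceptor_minimizes_loss
    (M K : ℕ) (Z : Matrix (Fin M) (Fin K) ℝ) (α : ℝ) (hα : 0 < α)
    (R : Matrix (Fin M) (Fin M) ℝ) (hR : R = Z * Zᵀ)
    (C : Matrix (Fin M) (Fin M) ℝ)
    (hC : C = R * (R + (α ^ 2)⁻¹ • (1 : Matrix (Fin M) (Fin M) ℝ))⁻¹)
    (L : Matrix (Fin M) (Fin M) ℝ → ℝ)
    (hL : ∀ B : Matrix (Fin M) (Fin M) ℝ,
      L B = frobSq (Z - B * Z) + (α ^ 2)⁻¹ * frobSq B) :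
    ∀ B : Matrix (Fin M) (Fin M) ℝ, L C ≤ L B := by
  intro B
  have hε : 0 < (α ^ 2)⁻¹ := by positivity
  have hRpsd : R.PosSemidef := by
    simpa [hR, conjTranspose_eq_transpose_of_trivial] using posSemidef_self_mul_conjTranspose Z
  have hnormal : C * (Z * Zᵀ + (α ^ 2)⁻¹ • 1) = Z * Zᵀ := by
    rw [hC, ← hR]
    exact mul_inv_add_smul_one_mul_cancel hRpsd hε
  simpa only [hL, conceptorLoss] using conceptorLoss_le_of_mul_eq hε.le hnormal B
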